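/- Let X and Y be real Hilbert spaces, A, V : X → Y bounded linear operators, γ_G > 0, and G : X → ℝ a γ_G-strongly convex function. Suppose x*, x̂ ∈ X and y*, ŷ ∈ Y are such that: some subgradient g* of G at x* satisfies g* + A*(y*) = 0; some subgradient f* of F* at y* satisfies f* = A(x*); some subgradient ĝ of G at x̂ satisfies ĝ + V*(ŷ) = 0; and some subgradient f̂ of F* at ŷ satisfies f̂ = A(x̂), where F* : Y → ℝ is any function. Then ‖x* − x̂‖ ≤ (1/γ_G)·‖V*(ŷ) − A*(ŷ)‖. -/

import Mathlib

open scoped RealInnerProductSpace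

/-- `g` is a subgradient of `f` at `x`. -/
def IsSubgradientAt {E : Type*} [NormedAddCommGroup E] [InnerProductSpace ℝ E]
    (f : E → ℝ) (g x : E) : Prop :=
  ∀ z, f x + ⟪g, z - x⟫ ≤ f z

/-- `f` is `γ`-strongly convex: `x ↦ f x − (γ/2)‖x‖²` is convex. -/
def IsStronglyConvex {E : Type*} [NormedAddCommGroup E] [InnerProductSpace ℝ E]
    (γ : ℝ) (f : E → ℝ) : Prop :=
  0 < γ ∧ ConvexOn ℝ Set.univ (fun x => f x - γ / 2 * ‖x‖ ^ 2)

/-! Strong convexity makes `∂G` strongly monotone, so with `e = x* - x̂`,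
`γ‖e‖² ≤ ⟪g* - ĝ, e⟫ = ⟪(V* - A*) ŷ, e⟫ - ⟪f* - f̂, y* - ŷ⟫`, where the last identity uses
`f* - f̂ = A e` and the definition of the adjoint. The subtracted term is nonnegative because
subgradients of any function (here `F*`) are monotone, and Cauchy–Schwarz finishes. -/

open Filter Topology

section Subgradient

variable {E : Type*} [NormedAddCommGroup E] [InnerProductSpace ℝ E] {f : E → ℝ}

/- Comparing `f` at `x + t • (z - x)` through convexity and through the subgradient inequality
gives the bound with `(1 - t) * m` in place of `m` for every `t ∈ (0, 1)`; let `t → 0`. -/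
theorem StrongConvexOn.add_inner_add_sq_le_of_isSubgradientAt {m : ℝ}
    (hf : StrongConvexOn Set.univ m f) {g x : E} (hg : IsSubgradientAt f g x) (z : E) :
    f x + ⟪g, z - x⟫ + m / 2 * ‖z - x‖ ^ 2 ≤ f z := by
  set c := m / 2 * ‖z - x‖ ^ 2 with hc
  have happrox : ∀ t ∈ Set.Ioo (0 : ℝ) 1, f x + ⟪g, z - x⟫ + (1 - t) * c ≤ f z := by
    rintro t ⟨ht₀, ht₁⟩
    have hconv : f ((1 - t) • x + t • z) ≤ (1 - t) * f x + t * f z - (1 - t) * t * c := by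
      rw [hc, norm_sub_rev]
      exact hf.2 (Set.mem_univ x) (Set.mem_univ z) (sub_nonneg.2 ht₁.le) ht₀.le (sub_add_cancel 1 t)
    have hsub := hg ((1 - t) • x + t • z)
    rw [show (1 - t) • x + t • z - x = t • (z - x) by module, real_inner_smul_right] at hsub
    have : t * (f x + ⟪g, z - x⟫ + (1 - t) * c) ≤ t * f z := by linear_combination hconv + hsub
    exact le_of_mul_le_mul_left this ht₀
  have hlim : Tendsto (fun t : ℝ => f x + ⟪g, z - x⟫ + (1 - t) * c) (𝓝[>] 0)
      (𝓝 (f x + ⟪g, z - x⟫ + c)) := by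
    have : Continuous fun t : ℝ => f x + ⟪g, z - x⟫ + (1 - t) * c := by fun_prop
    simpa using (this.tendsto 0).mono_left nhdsWithin_le_nhds
  exact le_of_tendsto hlim (eventually_of_mem (Ioo_mem_nhdsGT one_pos) happrox)

theorem StrongConvexOn.mul_norm_sq_le_inner_of_isSubgradientAt {m : ℝ}
    (hf : StrongConvexOn Set.univ m f) {g₁ g₂ x₁ x₂ : E} (h₁ : IsSubgradientAt f g₁ x₁)
    (h₂ : IsSubgradientAt f g₂ x₂) :
    m * ‖x₁ - x₂‖ ^ 2 ≤ ⟪g₁ - g₂, x₁ - x₂⟫ := by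
  have H₁ := hf.add_inner_add_sq_le_of_isSubgradientAt h₁ x₂
  have H₂ := hf.add_inner_add_sq_le_of_isSubgradientAt h₂ x₁
  rw [← neg_sub, inner_neg_right, norm_neg] at H₁
  rw [inner_sub_left]
  linarith

theorem IsSubgradientAt.inner_sub_nonneg {g₁ g₂ x₁ x₂ : E} (h₁ : IsSubgradientAt f g₁ x₁)
    (h₂ : IsSubgradientAt f g₂ x₂) :
    0 ≤ ⟪g₁ - g₂, x₁ - x₂⟫ := by
  have H₁ := h₁ x₂
  have H₂ := h₂ x₁
  rw [← neg_sub, inner_neg_right] at H₁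
  rw [inner_sub_left]
  linarith

end Subgradient

theorem le_one_div_mul_of_mul_sq_le_mul {a b γ : ℝ} (hγ : 0 < γ) (hb : 0 ≤ b)
    (h : γ * a ^ 2 ≤ b * a) : a ≤ 1 / γ * b := by
  rw [one_div_mul_eq_div, le_div_iff₀ hγ]
  nlinarith

theorem pddr_mismatch_error_estimate_general
    {X Y : Type*} [NormedAddCommGroup X] [InnerProductSpace ℝ X] [CompleteSpace X]
    [NormedAddCommGroup Y] [InnerProductSpace ℝ Y] [CompleteSpace Y]
    (A V : X →L[ℝ] Y) (γG : ℝ)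
    (G : X → ℝ) (hG : IsStronglyConvex γG G) (Fs : Y → ℝ)
    (xs xh : X) (ys yh : Y)
    (gs : X) (hgs : IsSubgradientAt G gs xs)
    (hes : gs + (ContinuousLinearMap.adjoint A) ys = 0)
    (fs : Y) (hfs : IsSubgradientAt Fs fs ys) (hhs : fs = A xs)
    (gh : X) (hgh : IsSubgradientAt G gh xh)
    (heh : gh + (ContinuousLinearMap.adjoint V) yh = 0)
    (fh : Y) (hfh : IsSubgradientAt Fs fh yh) (hhh : fh = A xh) :
    ‖xs - xh‖ ≤ (1 / γG) *
      ‖(ContinuousLinearMap.adjoint V) yh - (ContinuousLinearMap.adjoint A) yh‖ := by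
  obtain ⟨hγG, hconv⟩ := hG
  set d := (ContinuousLinearMap.adjoint V) yh - (ContinuousLinearMap.adjoint A) yh with hd
  have hstrong := (strongConvexOn_iff_convex.2 hconv).mul_norm_sq_le_inner_of_isSubgradientAt
    hgs hgh
  have hmono := hfs.inner_sub_nonneg hfh
  have hgap : gs - gh = d - (ContinuousLinearMap.adjoint A) (ys - yh) := by
    rw [eq_neg_of_add_eq_zero_left hes, eq_neg_of_add_eq_zero_left heh, hd, map_sub]
    abel
  have hsplit : ⟪gs - gh, xs - xh⟫ = ⟪d, xs - xh⟫ - ⟪fs - fh, ys - yh⟫ := by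
    rw [hgap, inner_sub_left, ContinuousLinearMap.adjoint_inner_left, hhs, hhh, ← map_sub,
      real_inner_comm (ys - yh)]
  refine le_one_div_mul_of_mul_sq_le_mul hγG (norm_nonneg d) ?_
  linarith [real_inner_le_norm d (xs - xh)]

/-- Error estimate: if `(x*, y*)` solves the exact optimality system
`0 ∈ ∂G(x*) + A*y*`, `0 ∈ ∂F*(y*) − Ax*` and `(x̂, ŷ)` the mismatched one with `V*`
in place of `A*`, then `‖x* − x̂‖ ≤ ‖(V − A)*ŷ‖ / γ_G`. -/
theorem pddr_mismatch_error_estimate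
    {X Y : Type*} [NormedAddCommGroup X] [InnerProductSpace ℝ X] [CompleteSpace X]
    [NormedAddCommGroup Y] [InnerProductSpace ℝ Y] [CompleteSpace Y]
    (A V : X →L[ℝ] Y) (γG : ℝ) (hγG : 0 < γG)
    (G : X → ℝ) (hG : IsStronglyConvex γG G) (Fs : Y → ℝ)
    (xs xh : X) (ys yh : Y)
    (gs : X) (hgs : IsSubgradientAt G gs xs)
    (hes : gs + (ContinuousLinearMap.adjoint A) ys = 0)
    (fs : Y) (hfs : IsSubgradientAt Fs fs ys) (hhs : fs = A xs)
    (gh : X) (hgh : IsSubgradientAt G gh xh)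
    (heh : gh + (ContinuousLinearMap.adjoint V) yh = 0)
    (fh : Y) (hfh : IsSubgradientAt Fs fh yh) (hhh : fh = A xh) :
    ‖xs - xh‖ ≤ (1 / γG) *
      ‖(ContinuousLinearMap.adjoint V) yh - (ContinuousLinearMap.adjoint A) yh‖ :=
  pddr_mismatch_error_estimate_general A V γG G hG Fs xs xh ys yh gs hgs hes fs hfs hhs gh hgh heh
    fh hfh hhh
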